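/- Let G(x) = log(R/‖x−x0‖) + (‖x−x0‖² − R²)/(2R²) be the Green-type function on the ball B_R(x0) ⊂ ℝ². Then G ≥ 0 on B_R(x0), G vanishes on the boundary ∂B_R(x0), and ∫_{B_R(x0)} G(x) dx = πR²/4. -/

import Mathlib

/-!
`G` is radial, `G x = g ‖x - x0‖`. With `t = r / R` we have `g r = -log t + (t² - 1)/2`, and
`log t ≤ t - 1` gives `g r ≥ (1 - t)²/2 ≥ 0`. In polar coordinates the integral is
`2π ∫₀ᴿ r g(r) dr`, and `r g(r)` has the antiderivative `r²/2 · log (R/r) + r⁴/(8R²)`,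
which tends to `0` at `0` and equals `R²/8` at `R`.
-/

open MeasureTheory Real

open Metric Set in
theorem setIntegral_ball_fun_norm_sub {E F : Type*} [NormedAddCommGroup E] [NormedSpace ℝ E]
    [Nontrivial E] [FiniteDimensional ℝ E] [MeasurableSpace E] [BorelSpace E] (μ : Measure E)
    [μ.IsAddHaarMeasure] [NormedAddCommGroup F] [NormedSpace ℝ F]
    (f : ℝ → F) (x₀ : E) {R : ℝ} (hR : 0 ≤ R) :
    ∫ x in ball x₀ R, f ‖x - x₀‖ ∂μ =
      Module.finrank ℝ E • μ.real (ball 0 1) •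
        ∫ r in (0 : ℝ)..R, r ^ (Module.finrank ℝ E - 1) • f r := by
  have hball : ∀ x, (ball x₀ R).indicator (fun x => f ‖x - x₀‖) x =
      (Iio R).indicator f ‖x - x₀‖ := fun x => by
    by_cases hx : x ∈ ball x₀ R <;>
      simp [indicator, hx, mem_ball_iff_norm.symm]
  rw [← integral_indicator measurableSet_ball, funext hball,
    integral_sub_right_eq_self (fun y => (Iio R).indicator f ‖y‖) x₀,
    integral_fun_norm_addHaar, intervalIntegral.integral_of_le hR,
    integral_Ioc_eq_integral_Ioo, ← Ioi_inter_Iio, ← setIntegral_indicator measurableSet_Iio]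
  congr 3 with r
  by_cases hr : r ∈ Iio R <;> simp [hr]

theorem setIntegral_ball_fun_norm_sub_fin_two {F : Type*} [NormedAddCommGroup F]
    [NormedSpace ℝ F] (f : ℝ → F) (x₀ : EuclideanSpace ℝ (Fin 2)) {R : ℝ} (hR : 0 ≤ R) :
    ∫ x in Metric.ball x₀ R, f ‖x - x₀‖ = (2 * π) • ∫ r in (0 : ℝ)..R, r • f r := by
  rw [setIntegral_ball_fun_norm_sub volume f x₀ hR, finrank_euclideanSpace_fin,
    measureReal_def, EuclideanSpace.volume_ball_fin_two]
  simp [ENNReal.toReal_ofReal pi_pos.le, ← smul_smul, ofNat_smul_eq_nsmul]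

noncomputable def greenProfile (R r : ℝ) : ℝ :=
  log (R / r) + (r ^ 2 - R ^ 2) / (2 * R ^ 2)

@[simp]
theorem greenProfile_self (R : ℝ) : greenProfile R R = 0 := by
  simp [greenProfile]

theorem greenProfile_nonneg {R r : ℝ} (hR : 0 < R) (hr : 0 < r) : 0 ≤ greenProfile R r := by
  set t := r / R
  have ht : 0 < t := div_pos hr hR
  have hlog : log (R / r) = -log t := by rw [← log_inv, inv_div]
  have hquad : (r ^ 2 - R ^ 2) / (2 * R ^ 2) = (t ^ 2 - 1) / 2 := by
    simp only [t]
    field_simp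
  have hle : log t ≤ t - 1 := log_le_sub_one_of_pos ht
  rw [greenProfile, hlog, hquad]
  nlinarith [sq_nonneg (t - 1)]

theorem integral_mul_greenProfile {R : ℝ} (hR : 0 < R) :
    ∫ r in (0 : ℝ)..R, r * greenProfile R r = R ^ 2 / 8 := by
  have hR2 : R ^ 2 ≠ 0 := by positivity
  have hexpand : (fun r => r * greenProfile R r) =
      fun r => r * log R - r * log r + r ^ 3 / (2 * R ^ 2) - r / 2 := by
    ext r
    rcases eq_or_ne r 0 with rfl | hr
    · simp
    · rw [greenProfile, log_div hR.ne' hr]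
      field_simp
      ring
  -- `r ^ 2 / 2 * log (R / r) + r ^ 4 / (8 * R ^ 2)`, written so as to be continuous at `0`
  let Φ : ℝ → ℝ := fun r => r ^ 2 / 2 * log R - r / 2 * (r * log r) + r ^ 4 / (8 * R ^ 2)
  have hΦ_cont : Continuous Φ := by fun_prop
  have hΦ_deriv : ∀ r ∈ Set.Ioo 0 R,
      HasDerivAt Φ (r * log R - r * log r + r ^ 3 / (2 * R ^ 2) - r / 2) r := by
    intro r hr
    have := ((((hasDerivAt_pow 2 r).div_const 2).mul_const (log R)).sub
      (((hasDerivAt_id r).div_const 2).mul (hasDerivAt_mul_log hr.1.ne'))).add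
      ((hasDerivAt_pow 4 r).div_const (8 * R ^ 2))
    refine this.congr_deriv ?_
    simp only [id, Nat.cast_ofNat]
    field_simp
    ring
  rw [hexpand, intervalIntegral.integral_eq_sub_of_hasDerivAt_of_le hR.le
    hΦ_cont.continuousOn hΦ_deriv ((by fun_prop : Continuous _).intervalIntegrable _ _)]
  simp only [Φ]
  field_simp
  ring

/-- The Green-type function `G(x) = log(R/‖x−x0‖) + (‖x−x0‖² − R²)/(2R²)` on
`B_R(x0) ⊂ ℝ²` is nonnegative on the ball, vanishes on the boundary sphere,
and has integral `πR²/4` over the ball. -/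
theorem stmt_7 (R : ℝ) (hR : 0 < R) (x0 : EuclideanSpace ℝ (Fin 2))
    (G : EuclideanSpace ℝ (Fin 2) → ℝ)
    (hG : ∀ x, x ≠ x0 →
      G x = Real.log (R / ‖x - x0‖) + (‖x - x0‖ ^ 2 - R ^ 2) / (2 * R ^ 2)) :
    (∀ x ∈ Metric.ball x0 R, x ≠ x0 → 0 ≤ G x) ∧
    (∀ x ∈ Metric.sphere x0 R, G x = 0) ∧
    (∫ x in Metric.ball x0 R, G x) = π * R ^ 2 / 4 := by
  have hG' : ∀ x ≠ x0, G x = greenProfile R ‖x - x0‖ := hG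
  refine ⟨fun x _ hx => ?_, fun x hx => ?_, ?_⟩
  · rw [hG' x hx]
    exact greenProfile_nonneg hR (norm_sub_pos_iff.mpr hx)
  · have hxR : ‖x - x0‖ = R := mem_sphere_iff_norm.mp hx
    have hx : x ≠ x0 := by
      rintro rfl
      simp [hR.ne] at hxR
    rw [hG' x hx, hxR, greenProfile_self]
  · have hae : ∀ᵐ x, x ∈ Metric.ball x0 R → G x = greenProfile R ‖x - x0‖ := by
      filter_upwards [compl_mem_ae_iff.mpr (measure_singleton x0)] with x hx _
      exact hG' x hx
    rw [setIntegral_congr_ae measurableSet_ball hae,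
      setIntegral_ball_fun_norm_sub_fin_two _ x0 hR.le]
    simp only [smul_eq_mul, integral_mul_greenProfile hR]
    ring
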